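/- arXiv:1906.10314 — 2 statements merged into one kernel-verified Lean document; each statement's English description precedes it below -/
import Mathlib

section
/- Let 2 ≤ d ≤ d' and 1 ≤ m < d be integers. If there exists an m×d partial Hadamard matrix that cannot be extended to an (m+1)×d partial Hadamard matrix, then there exists a (d(d'−1)+m)-number USV1Bd in M_{d×d'}, i.e., a (d(d'−1)+m)-number unextendible maximally entangled basis (UMEB) in ℂ^d ⊗ ℂ^{d'}. -/
/-!
Read a `d × d'` matrix along its `d'` shifted diagonals `{(i, i + t)}`, `t ∈ Fin d'`. A matrix
supported on one shifted diagonal with unimodular entries satisfies `A Aᴴ = 1`, and matrices on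
different shifted diagonals are orthogonal. Put the characters of `Fin d` (a complete set of
orthogonal unimodular rows) on every diagonal `t ≠ 0` and the rows of the unextendible partial
Hadamard matrix `H` on the diagonal `t = 0`: this gives `d (d' - 1) + m` orthonormal
singular-value-1 matrices. A matrix `B` orthogonal to all of them vanishes on every diagonal
`t ≠ 0` by completeness of the characters, so if `B Bᴴ = 1` its diagonal `t = 0` would be a
unimodular vector orthogonal to the rows of `H`.
-/

open Matrix ComplexConjugate

theorem Complex.mul_conj_eq_one_iff {z : ℂ} : z * conj z = 1 ↔ ‖z‖ = 1 := by
  rw [Complex.mul_conj', ← Complex.ofReal_pow, Complex.ofReal_eq_one,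
    pow_eq_one_iff_of_nonneg (norm_nonneg z) two_ne_zero]

section PartialHadamard

variable {ι n : Type*} [Fintype n]

def IsPartialHadamard (H : ι → n → ℂ) : Prop :=
  (∀ y j, ‖H y j‖ = 1) ∧ Pairwise fun y y' => star (H y) ⬝ᵥ H y' = 0

theorem star_dotProduct_self_of_norm_eq_one {v : n → ℂ} (hv : ∀ j, ‖v j‖ = 1) :
    star v ⬝ᵥ v = Fintype.card n := by
  simp [dotProduct, mul_comm _ (v _), Complex.mul_conj_eq_one_iff.2 (hv _)]

theorem IsPartialHadamard.star_dotProduct_eq_ite [DecidableEq ι] {H : ι → n → ℂ}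
    (hH : IsPartialHadamard H) (y y' : ι) :
    star (H y) ⬝ᵥ H y' = if y = y' then (Fintype.card n : ℂ) else 0 := by
  split_ifs with h
  · exact h ▸ star_dotProduct_self_of_norm_eq_one (hH.1 y)
  · exact hH.2 h

variable [AddCommGroup n]

theorem AddChar.isPartialHadamard : IsPartialHadamard fun ψ : AddChar n ℂ => (ψ : n → ℂ) := by
  refine ⟨fun ψ x => ψ.norm_apply x, fun ψ ψ' h => ?_⟩
  simpa [RCLike.wInner_cWeight_eq_expect, Fintype.expect_eq_sum_div_card, dotProduct,
    Fintype.card_ne_zero, mul_comm] using AddChar.wInner_cWeight_eq_zero_iff_ne.2 h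

theorem AddChar.eq_zero_of_forall_star_dotProduct_eq_zero {u : n → ℂ}
    (hu : ∀ ψ : AddChar n ℂ, star ⇑ψ ⬝ᵥ u = 0) : u = 0 := by
  classical
  funext x
  -- Fourier inversion: `∑ ψ, ψ (x - y)` is `|n|` at `y = x` and `0` elsewhere.
  have inversion : (Fintype.card n : ℂ) * u x = ∑ ψ : AddChar n ℂ, ψ x * (star ⇑ψ ⬝ᵥ u) :=
    calc (Fintype.card n : ℂ) * u x = ∑ y, u y * ∑ ψ : AddChar n ℂ, ψ (x - y) := by
          simp [AddChar.sum_apply_eq_ite, sub_eq_zero, mul_comm]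
      _ = ∑ ψ : AddChar n ℂ, ψ x * (star ⇑ψ ⬝ᵥ u) := by
          simp only [dotProduct, Finset.mul_sum, sub_eq_add_neg, AddChar.map_add_eq_mul,
            AddChar.map_neg_eq_conj]
          rw [Finset.sum_comm]
          simp [mul_comm, mul_left_comm]
  simpa [hu, Fintype.card_ne_zero] using inversion

end PartialHadamard

section ShiftDiag

variable {n G R : Type*} [AddCommGroup G] [DecidableEq G] [Semiring R] (e : n ↪ G)

def shiftDiag (f : n → R) (t : G) : Matrix n G R :=
  of fun i j => if j = e i + t then f i else 0

theorem eq_shiftDiag_of_apply_eq_zero {B : Matrix n G R} {t : G}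
    (hB : ∀ s ≠ t, ∀ i, B i (e i + s) = 0) : B = shiftDiag e (fun i => B i (e i + t)) t := by
  ext i j
  obtain ⟨s, rfl⟩ : ∃ s, j = e i + s := ⟨j - e i, by abel⟩
  by_cases hs : s = t
  · simp [shiftDiag, hs]
  · simp [shiftDiag, hs, hB s hs i]

variable [Fintype G] [StarRing R]

theorem shiftDiag_mul_conjTranspose_shiftDiag [DecidableEq n] (f : n → R) (t : G) :
    shiftDiag e f t * (shiftDiag e f t)ᴴ = diagonal fun i => f i * star (f i) := by
  ext i i'
  rcases eq_or_ne i i' with rfl | h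
  · simp [mul_apply, shiftDiag]
  · simp [mul_apply, shiftDiag, apply_ite star, h, h.symm]

variable [Fintype n]

theorem trace_conjTranspose_shiftDiag_mul (f : n → R) (t : G) (B : Matrix n G R) :
    ((shiftDiag e f t)ᴴ * B).trace = star f ⬝ᵥ fun i => B i (e i + t) := by
  simp only [trace, diag_apply, mul_apply]
  rw [Finset.sum_comm]
  simp [shiftDiag, dotProduct, apply_ite star]

theorem trace_conjTranspose_shiftDiag_mul_shiftDiag (f g : n → R) (t s : G) :
    ((shiftDiag e f t)ᴴ * shiftDiag e g s).trace = if t = s then star f ⬝ᵥ g else 0 := by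
  rw [trace_conjTranspose_shiftDiag_mul]
  split_ifs <;> simp [shiftDiag, dotProduct, *]

end ShiftDiag

def IsUSV1Bd {ι n G : Type*} [Fintype n] [DecidableEq n] [Fintype G] [DecidableEq ι]
    (A : ι → Matrix n G ℂ) : Prop :=
  (∀ i, A i * (A i)ᴴ = 1) ∧
    (∀ i j, ((A i)ᴴ * A j).trace = if i = j then (Fintype.card n : ℂ) else 0) ∧
    ∀ B : Matrix n G ℂ, (∀ i, ((A i)ᴴ * B).trace = 0) → ¬ B * Bᴴ = 1

theorem IsUSV1Bd.comp_equiv {ι ι' n G : Type*} [Fintype n] [DecidableEq n] [Fintype G]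
    [DecidableEq ι] [DecidableEq ι'] {A : ι → Matrix n G ℂ} (hA : IsUSV1Bd A) (σ : ι' ≃ ι) :
    IsUSV1Bd (A ∘ σ) :=
  ⟨fun i => hA.1 (σ i), fun i j => by simp [hA.2.1, σ.injective.eq_iff],
    fun B hB => hA.2.2 B fun i => by simpa using hB (σ.symm i)⟩

section Construction

variable {ι κ n G : Type*} [Fintype n] [DecidableEq n] [AddCommGroup G] [Fintype G]
  [DecidableEq G] (e : n ↪ G) (K : κ → n → ℂ) (H : ι → n → ℂ)

def hadamardShiftFamily : (κ × {t : G // t ≠ 0}) ⊕ ι → Matrix n G ℂ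
  | .inl (k, t) => shiftDiag e (K k) t
  | .inr y => shiftDiag e (H y) 0

variable {K H}

theorem isUSV1Bd_hadamardShiftFamily [DecidableEq ι] [DecidableEq κ] (hK : IsPartialHadamard K)
    (hK_complete : ∀ u, (∀ k, star (K k) ⬝ᵥ u = 0) → u = 0) (hH : IsPartialHadamard H)
    (hH_unext : ¬ ∃ v : n → ℂ, (∀ j, ‖v j‖ = 1) ∧ ∀ y, star (H y) ⬝ᵥ v = 0) :
    IsUSV1Bd (hadamardShiftFamily e K H) := by
  refine ⟨?_, ?_, ?_⟩
  · rintro (⟨k, t⟩ | y) <;>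
      simp [hadamardShiftFamily, shiftDiag_mul_conjTranspose_shiftDiag,
        Complex.mul_conj_eq_one_iff.2 (hK.1 _ _), Complex.mul_conj_eq_one_iff.2 (hH.1 _ _)]
  · rintro (⟨k, t, ht⟩ | y) (⟨k', t', ht'⟩ | y') <;>
      simp only [hadamardShiftFamily, trace_conjTranspose_shiftDiag_mul_shiftDiag]
    · rw [hK.star_dotProduct_eq_ite]
      split_ifs <;> simp_all
    · simp [ht]
    · simp [Ne.symm ht']
    · simp [hH.star_dotProduct_eq_ite]
  · intro B hB hBB
    have hB_off : ∀ s ≠ (0 : G), ∀ i, B i (e i + s) = 0 := fun s hs =>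
      congrFun (hK_complete _ fun k => by
        simpa [hadamardShiftFamily, trace_conjTranspose_shiftDiag_mul] using hB (.inl (k, ⟨s, hs⟩)))
    have hB_eq : B = shiftDiag e (fun i => B i (e i)) 0 := by
      simpa using eq_shiftDiag_of_apply_eq_zero e hB_off
    refine hH_unext ⟨fun i => B i (e i), fun j => ?_, fun y => ?_⟩
    · rw [hB_eq, shiftDiag_mul_conjTranspose_shiftDiag, diagonal_eq_one] at hBB
      exact Complex.mul_conj_eq_one_iff.1 (congrFun hBB j)
    · simpa [hadamardShiftFamily, trace_conjTranspose_shiftDiag_mul] using hB (.inr y)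

end Construction

theorem umeb_from_unextendible_hadamard_general (d d' m : ℕ)
    (hdd : d ≤ d')
    (h : ∃ H : Matrix (Fin m) (Fin d) ℂ,
      (∀ y j, ‖H y j‖ = 1) ∧
      (∀ y y' : Fin m, y ≠ y' → ∑ j, (starRingEnd ℂ) (H y j) * H y' j = 0) ∧
      ¬ ∃ v : Fin d → ℂ, (∀ i, ‖v i‖ = 1) ∧
          (∀ y : Fin m, ∑ j, (starRingEnd ℂ) (H y j) * v j = 0)) :
    ∃ A : Fin (d * (d' - 1) + m) → Matrix (Fin d) (Fin d') ℂ,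
      (∀ i, A i * (A i)ᴴ = 1) ∧
      (∀ i j, ((A i)ᴴ * A j).trace = if i = j then (d : ℂ) else 0) ∧
      (∀ B : Matrix (Fin d) (Fin d') ℂ,
        (∀ i, ((A i)ᴴ * B).trace = 0) → ¬ (B * Bᴴ = 1)) := by
  obtain ⟨H, hH_norm, hH_orth, hH_unext⟩ := h
  -- for `d = 0` the empty vector would extend `H`
  have : NeZero d := ⟨by rintro rfl; exact hH_unext ⟨finZeroElim, finZeroElim, fun _ => rfl⟩⟩
  have : NeZero d' := ⟨by have := this.ne; omega⟩
  have hcard : Fintype.card ((AddChar (Fin d) ℂ × {t : Fin d' // t ≠ 0}) ⊕ Fin m) =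
      d * (d' - 1) + m := by
    simp [Fintype.card_subtype_compl]
  have hA := (isUSV1Bd_hadamardShiftFamily (Fin.castLEEmb hdd) AddChar.isPartialHadamard
    (fun _ => AddChar.eq_zero_of_forall_star_dotProduct_eq_zero) ⟨hH_norm, hH_orth⟩
    hH_unext).comp_equiv (Fintype.equivFinOfCardEq hcard).symm
  exact ⟨_, by simpa [IsUSV1Bd] using hA⟩

/-- if there exists an `m×d` partial Hadamard matrix (`m < d`) that
cannot be extended to an `(m+1)×d` partial Hadamard matrix (i.e., no unimodular vector
is orthogonal to all of its rows), then there exists a `(d(d'-1)+m)`-number USV1Bd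
(that is, a `(d(d'-1)+m)`-number UMEB) in `M_{d×d'}`, for any `d' ≥ d`. -/
theorem umeb_from_unextendible_hadamard (d d' m : ℕ)
    (hd : 2 ≤ d) (hdd : d ≤ d') (hm1 : 1 ≤ m) (hm2 : m < d)
    (h : ∃ H : Matrix (Fin m) (Fin d) ℂ,
      (∀ y j, ‖H y j‖ = 1) ∧
      (∀ y y' : Fin m, y ≠ y' → ∑ j, (starRingEnd ℂ) (H y j) * H y' j = 0) ∧
      ¬ ∃ v : Fin d → ℂ, (∀ i, ‖v i‖ = 1) ∧
          (∀ y : Fin m, ∑ j, (starRingEnd ℂ) (H y j) * v j = 0)) :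
    ∃ A : Fin (d * (d' - 1) + m) → Matrix (Fin d) (Fin d') ℂ,
      (∀ i, A i * (A i)ᴴ = 1) ∧
      (∀ i j, ((A i)ᴴ * A j).trace = if i = j then (d : ℂ) else 0) ∧
      (∀ B : Matrix (Fin d) (Fin d') ℂ,
        (∀ i, ((A i)ᴴ * B).trace = 0) → ¬ (B * Bᴴ = 1)) :=
  umeb_from_unextendible_hadamard_general d d' m hdd h
end

section
/- There exists a 28-number USV1B4 in M_{6×7}, i.e., a family of twenty-eight 4-singular-value-1 matrices {A_i}_{i=1}^{28} in the space of 6×7 complex matrices with Tr(A_iᴴ A_j) = 4·δ_{ij} for all i, j, such that every B ∈ M_{6×7} with Tr(A_iᴴ B) = 0 for all i is not a 4-singular-value-1 matrix. Equivalently, there is a 28-number special unextendible entangled basis with Schmidt number 4 (SUEB4) in ℂ^6 ⊗ ℂ^7. -/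
open Matrix

/-- `A` is a `k`-singular-value-1 matrix. -/
def IsSV1 {m n : Type*} [Fintype m] [Fintype n] (k : ℕ) (A : Matrix m n ℂ) : Prop :=
  (Aᴴ * A) * (Aᴴ * A) = Aᴴ * A ∧ A.rank = k

/-- Hadamard-type sign: entry of H₂ ⊗ H₂ (only rows `j < 4` matter). -/
def hadSgn (s : Fin 4) (j : Fin 6) : ℂ :=
  (-1) ^ ((s : ℕ) / 2 * ((j : ℕ) / 2) + (s : ℕ) % 2 * ((j : ℕ) % 2))

/-- column position of the single nonzero entry in row `j` of `Amat s t`. -/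
def colIx (j : Fin 6) (t : Fin 7) : Fin 7 :=
  ⟨((j : ℕ) + (t : ℕ)) % 7, Nat.mod_lt _ (by norm_num)⟩

def Amat (s : Fin 4) (t : Fin 7) : Matrix (Fin 6) (Fin 7) ℂ :=
  fun j c => if (j : ℕ) < 4 then (if c = colIx j t then hadSgn s j else 0) else 0

lemma star_hadSgn (s : Fin 4) (j : Fin 6) : star (hadSgn s j) = hadSgn s j := by
  simp [hadSgn, star_pow]

lemma hadSgn_mul_self (s : Fin 4) (j : Fin 6) : hadSgn s j * hadSgn s j = 1 := by
  rw [hadSgn, ← pow_add, ← two_mul, pow_mul]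
  norm_num

lemma colIx_inj {j j' : Fin 6} {t : Fin 7} (h : colIx j t = colIx j' t) : j = j' := by
  have h2 : ((j : ℕ) + (t : ℕ)) % 7 = ((j' : ℕ) + (t : ℕ)) % 7 := congrArg Fin.val h
  have hj := j.isLt
  have hj' := j'.isLt
  exact Fin.ext (by omega)

lemma colIx_t_inj {j : Fin 6} {t t' : Fin 7} (h : colIx j t = colIx j t') : t = t' := by
  have h2 : ((j : ℕ) + (t : ℕ)) % 7 = ((j : ℕ) + (t' : ℕ)) % 7 := congrArg Fin.val h
  have ht := t.isLt
  have ht' := t'.isLt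
  have hj := j.isLt
  exact Fin.ext (by omega)

def dvec : Fin 6 → ℂ := fun j => if (j : ℕ) < 4 then 1 else 0

lemma Amat_mul_conjTranspose (s : Fin 4) (t : Fin 7) :
    Amat s t * (Amat s t)ᴴ = Matrix.diagonal dvec := by
  ext j j'
  simp only [Matrix.mul_apply, Matrix.conjTranspose_apply, Amat, Matrix.diagonal, dvec,
    Matrix.of_apply]
  by_cases hj : (j : ℕ) < 4
  · by_cases hj' : (j' : ℕ) < 4
    · simp only [hj, hj', if_true]
      by_cases hjj : j = j'
      · subst hjj
        rw [Finset.sum_congr rfl (fun c _ => ?_), Finset.sum_ite_eq' Finset.univ (colIx j t)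
          (fun _ => hadSgn s j * hadSgn s j)]
        · simp [hadSgn_mul_self, hj]
        · rcases eq_or_ne c (colIx j t) with h | h <;>
            simp [h, star_hadSgn]
      · rw [Finset.sum_eq_zero (fun c _ => ?_)]
        · simp [hjj]
        · rcases eq_or_ne c (colIx j t) with h | h
          · have hne : colIx j t ≠ colIx j' t := fun hc => hjj (colIx_inj hc)
            simp [h, hne]
          · simp [h]
    · rw [Finset.sum_eq_zero (fun c _ => by simp [hj'])]
      have : j ≠ j' := fun h => hj' (h ▸ hj)
      simp [this]
  · rw [Finset.sum_eq_zero (fun c _ => by simp [hj])]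
    by_cases hjj : j = j'
    · subst hjj; simp [hj]
    · simp [hjj]

lemma diag_mul_Amat (s : Fin 4) (t : Fin 7) :
    Matrix.diagonal dvec * Amat s t = Amat s t := by
  ext j c
  rw [Matrix.diagonal_mul]
  by_cases hj : (j : ℕ) < 4
  · simp [dvec, hj]
  · simp [dvec, hj, Amat]

lemma isSV1_Amat (s : Fin 4) (t : Fin 7) : IsSV1 4 (Amat s t) := by
  constructor
  · calc ((Amat s t)ᴴ * Amat s t) * ((Amat s t)ᴴ * Amat s t)
        = (Amat s t)ᴴ * ((Amat s t * (Amat s t)ᴴ) * Amat s t) := by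
          simp only [Matrix.mul_assoc]
      _ = (Amat s t)ᴴ * Amat s t := by
          rw [Amat_mul_conjTranspose, diag_mul_Amat]
  · open scoped ComplexOrder in
    rw [← Matrix.rank_self_mul_conjTranspose, Amat_mul_conjTranspose, Matrix.rank_diagonal]
    rw [Fintype.card_congr (Equiv.subtypeEquivRight (q := fun j : Fin 6 => (j : ℕ) < 4)
      (fun j => by simp only [dvec]; split <;> simp [*]))]
    decide

lemma trace_Amat_mul (s : Fin 4) (t : Fin 7) (B : Matrix (Fin 6) (Fin 7) ℂ) :
    ((Amat s t)ᴴ * B).trace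
      = ∑ j : Fin 6, if (j : ℕ) < 4 then hadSgn s j * B j (colIx j t) else 0 := by
  rw [Matrix.trace]
  simp only [Matrix.diag_apply, Matrix.mul_apply, Matrix.conjTranspose_apply]
  rw [Finset.sum_comm]
  refine Finset.sum_congr rfl fun j _ => ?_
  by_cases hj : (j : ℕ) < 4
  · simp only [Amat, hj, if_true]
    rw [Finset.sum_congr rfl (fun c _ => ?_), Finset.sum_ite_eq' Finset.univ (colIx j t)
      (fun c => hadSgn s j * B j c)]
    · simp
    · rcases eq_or_ne c (colIx j t) with h | h <;> simp [h, star_hadSgn]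
  · simp [Amat, hj]

lemma trace_Amat_Amat (s s' : Fin 4) (t t' : Fin 7) :
    ((Amat s t)ᴴ * Amat s' t').trace = if s = s' ∧ t = t' then 4 else 0 := by
  rw [trace_Amat_mul]
  by_cases ht : t = t'
  · subst ht
    have hcong : ∀ j : Fin 6, (if (j : ℕ) < 4 then hadSgn s j * Amat s' t j (colIx j t) else 0)
        = (if (j : ℕ) < 4 then hadSgn s j * hadSgn s' j else 0) := by
      intro j; by_cases hj : (j : ℕ) < 4 <;> simp [Amat, hj]
    rw [Finset.sum_congr rfl fun j _ => hcong j]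
    fin_cases s <;> fin_cases s' <;>
      norm_num [Fin.sum_univ_six, hadSgn, Fin.ext_iff,
        show ((0 : Fin 6) : ℕ) = 0 from rfl, show ((1 : Fin 6) : ℕ) = 1 from rfl,
        show ((2 : Fin 6) : ℕ) = 2 from rfl, show ((3 : Fin 6) : ℕ) = 3 from rfl,
        show ((4 : Fin 6) : ℕ) = 4 from rfl, show ((5 : Fin 6) : ℕ) = 5 from rfl,
        show ((0 : Fin 4) : ℕ) = 0 from rfl, show ((1 : Fin 4) : ℕ) = 1 from rfl,
        show ((2 : Fin 4) : ℕ) = 2 from rfl, show ((3 : Fin 4) : ℕ) = 3 from rfl,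
        show (Finset.filter (fun x : Fin 6 => (x : ℕ) < 4) Finset.univ).card = 4 from by decide]
  · rw [Finset.sum_eq_zero, if_neg (by tauto)]
    intro j _
    by_cases hj : (j : ℕ) < 4
    · have hne : colIx j t ≠ colIx j t' := fun hc => ht (colIx_t_inj hc)
      simp [Amat, hj, hne]
    · simp [hj]

def Fsel : Matrix (Fin 6) (Fin 2) ℂ := fun j k => if (j : ℕ) = (k : ℕ) + 4 then 1 else 0

noncomputable def idx : Fin 4 × Fin 7 ≃ Fin 28 := finProdFinEquiv

noncomputable def Afam : Fin 28 → Matrix (Fin 6) (Fin 7) ℂ :=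
  fun i => Amat (idx.symm i).1 (idx.symm i).2

theorem exists_28_USV1B4_6x7_aux :
    ∃ A : Fin 28 → Matrix (Fin 6) (Fin 7) ℂ,
      (∀ i, IsSV1 4 (A i)) ∧
      (∀ i j, ((A i)ᴴ * A j).trace = if i = j then (4 : ℂ) else 0) ∧
      (∀ B : Matrix (Fin 6) (Fin 7) ℂ,
        (∀ i, ((A i)ᴴ * B).trace = 0) → ¬ IsSV1 4 B) := by
  refine ⟨Afam, fun i => isSV1_Amat _ _, fun i j => ?_, fun B hB => ?_⟩
  · rw [Afam, Afam, trace_Amat_Amat]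
    have h : ((idx.symm i).1 = (idx.symm j).1 ∧ (idx.symm i).2 = (idx.symm j).2) ↔ i = j := by
      rw [← Prod.ext_iff, Equiv.apply_eq_iff_eq]
    rw [if_congr h rfl rfl]
  · -- every matrix orthogonal to the family has zero rows 0..3
    have key : ∀ (s : Fin 4) (t : Fin 7), ((Amat s t)ᴴ * B).trace = 0 := by
      intro s t
      have h := hB (idx (s, t))
      rwa [Afam, Equiv.symm_apply_apply] at h
    have row0 : ∀ (t : Fin 7) (j : Fin 6), (j : ℕ) < 4 → B j (colIx j t) = 0 := by
      intro t j hj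
      have E : ∀ s : Fin 4,
          hadSgn s 0 * B 0 (colIx 0 t) + hadSgn s 1 * B 1 (colIx 1 t)
            + hadSgn s 2 * B 2 (colIx 2 t) + hadSgn s 3 * B 3 (colIx 3 t) = 0 := by
        intro s
        have h := key s t
        rw [trace_Amat_mul] at h
        simpa [Fin.sum_univ_six,
          show ((0 : Fin 6) : ℕ) = 0 from rfl, show ((1 : Fin 6) : ℕ) = 1 from rfl,
          show ((2 : Fin 6) : ℕ) = 2 from rfl, show ((3 : Fin 6) : ℕ) = 3 from rfl,
          show ((4 : Fin 6) : ℕ) = 4 from rfl, show ((5 : Fin 6) : ℕ) = 5 from rfl,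
          add_assoc] using h
      have E0 := E 0
      have E1 := E 1
      have E2 := E 2
      have E3 := E 3
      norm_num [hadSgn,
        show ((0 : Fin 6) : ℕ) = 0 from rfl, show ((1 : Fin 6) : ℕ) = 1 from rfl,
        show ((2 : Fin 6) : ℕ) = 2 from rfl, show ((3 : Fin 6) : ℕ) = 3 from rfl,
        show ((0 : Fin 4) : ℕ) = 0 from rfl, show ((1 : Fin 4) : ℕ) = 1 from rfl,
        show ((2 : Fin 4) : ℕ) = 2 from rfl, show ((3 : Fin 4) : ℕ) = 3 from rfl]
        at E0 E1 E2 E3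
      fin_cases j
      · show B 0 (colIx 0 t) = 0
        linear_combination (E0 + E1 + E2 + E3) / 4
      · show B 1 (colIx 1 t) = 0
        linear_combination (E0 - E1 + E2 - E3) / 4
      · show B 2 (colIx 2 t) = 0
        linear_combination (E0 + E1 - E2 - E3) / 4
      · show B 3 (colIx 3 t) = 0
        linear_combination (E0 - E1 - E2 + E3) / 4
      · exact absurd hj (by norm_num)
      · exact absurd hj (by norm_num)
    have hrow : ∀ (j : Fin 6), (j : ℕ) < 4 → ∀ c : Fin 7, B j c = 0 := by
      intro j hj c
      have hc : colIx j ⟨((c : ℕ) + 7 - (j : ℕ)) % 7, by omega⟩ = c := by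
        apply Fin.ext
        show ((j : ℕ) + ((c : ℕ) + 7 - (j : ℕ)) % 7) % 7 = (c : ℕ)
        omega
      rw [← hc]
      exact row0 _ j hj
    -- hence B factors through 2 rows, so its rank is at most 2
    intro hSV
    have hrank := hSV.2
    have hfac : B = Fsel * B.submatrix (fun k : Fin 2 => (⟨(k : ℕ) + 4, by omega⟩ : Fin 6)) id := by
      ext j c
      rw [Matrix.mul_apply, Fin.sum_univ_two]
      fin_cases j <;>
        simp [Fsel, Matrix.submatrix_apply,
          show ((0 : Fin 2) : ℕ) = 0 from rfl, show ((1 : Fin 2) : ℕ) = 1 from rfl] <;>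
        exact hrow _ (by decide) c
    have hle : B.rank ≤ 2 := by
      rw [hfac]
      exact le_trans (Matrix.rank_mul_le_right _ _)
        (le_trans (Matrix.rank_le_card_height _) (by simp))
    omega

/-- Example 3.2: there is a 28-number USV1B4 in `M_{6×7}`, i.e., a
28-number SUEB4 in `ℂ^6 ⊗ ℂ^7`. -/
theorem exists_28_USV1B4_6x7 :
    ∃ A : Fin 28 → Matrix (Fin 6) (Fin 7) ℂ,
      (∀ i, IsSV1 4 (A i)) ∧
      (∀ i j, ((A i)ᴴ * A j).trace = if i = j then (4 : ℂ) else 0) ∧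
      (∀ B : Matrix (Fin 6) (Fin 7) ℂ,
        (∀ i, ((A i)ᴴ * B).trace = 0) → ¬ IsSV1 4 B) := by
  exact exists_28_USV1B4_6x7_aux
end
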